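/- In the binary system (β = 2), if K is an even natural number and X is any natural number, then the multi-number carry value transformation of K copies of X equals the sum of the K numbers: CVT_2(X, X, …, X) [K copies] = K·X. -/

import Mathlib

/-- The `i`-th base-`β` digit of `X`. -/
def digit (β X i : ℕ) : ℕ := X / β ^ i % β

/-- Column sum at digit position `i` of a list of naturals in base `β`. -/
def colSum (β : ℕ) (L : List ℕ) (i : ℕ) : ℕ := (L.map fun X => digit β X i).sum

/-- Multi-number XOR in base `β`. -/
noncomputable def XORb (β : ℕ) (L : List ℕ) : ℕ := ∑ᶠ i : ℕ, (colSum β L i % β) * β ^ i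

/-- Multi-number carry value transformation in base `β`. -/
noncomputable def CVTb (β : ℕ) (L : List ℕ) : ℕ := ∑ᶠ i : ℕ, (colSum β L i / β) * β ^ (i + 1)

/-! If `β ∣ K`, every column sum `K * dᵢ(X)` of `K` copies of `X` is divisible by `β`, so the
carry at position `i` is exactly `(K / β) * dᵢ(X)` and is shifted back by one factor `β`: the
carry value is `K` times the base-`β` expansion `∑ dᵢ(X) βⁱ = X`. -/

lemma sum_range_digit_mul_pow (β X n : ℕ) :
    ∑ i ∈ Finset.range n, digit β X i * β ^ i = X % β ^ n := by
  induction n with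
  | zero => simp [Nat.mod_one]
  | succ n ih =>
    rw [Finset.sum_range_succ, ih, pow_succ, Nat.mod_mul, digit]
    ring

lemma digit_eq_zero_of_lt {β X i : ℕ} (h : X < β ^ i) : digit β X i = 0 := by
  simp [digit, Nat.div_eq_of_lt h]

lemma support_digit_mul_pow_subset {β : ℕ} (hβ : 1 < β) (X : ℕ) :
    Function.support (fun i => digit β X i * β ^ i) ⊆ Finset.range X := by
  intro i hi
  by_contra hiX
  have hXi : X < β ^ i :=
    (Nat.lt_pow_self hβ).trans_le (Nat.pow_le_pow_right (by omega) (by simpa using hiX))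
  simp [digit_eq_zero_of_lt hXi] at hi

lemma finsum_digit_mul_pow {β : ℕ} (hβ : 1 < β) (X : ℕ) :
    ∑ᶠ i, digit β X i * β ^ i = X := by
  rw [finsum_eq_finsetSum_of_support_subset _ (support_digit_mul_pow_subset hβ X),
    sum_range_digit_mul_pow, Nat.mod_eq_of_lt (Nat.lt_pow_self hβ)]

lemma colSum_replicate (β K X i : ℕ) :
    colSum β (List.replicate K X) i = K * digit β X i := by
  simp [colSum, List.sum_replicate]

theorem CVTb_replicate_of_dvd {β K : ℕ} (hβ : 1 < β) (hK : β ∣ K) (X : ℕ) :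
    CVTb β (List.replicate K X) = K * X := by
  obtain ⟨m, rfl⟩ := hK
  calc CVTb β (List.replicate (β * m) X)
      = ∑ᶠ i, β * m * (digit β X i * β ^ i) := finsum_congr fun i => by
        rw [colSum_replicate, mul_assoc, Nat.mul_div_cancel_left _ (by omega), pow_succ]
        ring
    _ = β * m * X := by rw [← mul_finsum, finsum_digit_mul_pow hβ]

theorem stmt_5 (K X : ℕ) (hK : Even K) :
    CVTb 2 (List.replicate K X) = K * X :=
  CVTb_replicate_of_dvd one_lt_two (even_iff_two_dvd.mp hK) X
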